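/- arXiv:math/0211242 — 4 statements merged into one kernel-verified Lean document; each statement's English description precedes it below -/
import Mathlib

section
/- Let G be a locally compact Hausdorff second countable group acting properly (in Bourbaki's sense) on a completely regular G-space X whose compact subsets are metrizable, with X/G paracompact Hausdorff. If X/G is compact, then X is locally compact and second countable. -/
/-!
Fix `x` and Bourbaki neighbourhoods `x ∈ U_y`, `y ∈ V_y`; finitely many `V_y` cover the compact
orbit space, and we put `U = ⋂ U_y` over them. An ultrafilter `F` containing `U` projects to a
limit `[y]` with `y ∈ V_{y₀}`. Near the orbit of `y`, every point of `U` is `g • w` with `w` near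
`y` and `g⁻¹` in `C = closure {g | g • U_{y₀} ∩ V_{y₀} ≠ ∅}`, which is compact; by the tube lemma
`F` then converges to a point of `C⁻¹ • y`. So closed neighbourhoods of `x` inside `U` are compact.
Lifting a finite cover of `X/G` gives a compact `K` with `G • K = X`, so `X` is σ-compact, and a
σ-compact locally compact space with metrizable compact subsets is second countable.
-/

open Pointwise

/-- Bourbaki-properness of a group action on a topological space. -/
def BourbakiProper (G X : Type*) [Group G] [TopologicalSpace G] [TopologicalSpace X]
    [MulAction G X] : Prop :=
  ∀ x y : X, ∃ U V : Set X, IsOpen U ∧ IsOpen V ∧ x ∈ U ∧ y ∈ V ∧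
    IsCompact (closure {g : G | (g • U ∩ V).Nonempty})

open Set Filter Topology TopologicalSpace

section General

variable {X Y : Type*} [TopologicalSpace X] [TopologicalSpace Y]

theorem Ultrafilter.exists_le_nhds_of_le_nhdsSet {K : Set X} (hK : IsCompact K)
    (F : Ultrafilter X) (hF : ↑F ≤ 𝓝ˢ K) : ∃ z ∈ K, (F : Filter X) ≤ 𝓝 z := by
  by_contra! h
  have hdisj : Disjoint (𝓝ˢ K) F :=
    hK.disjoint_nhdsSet_left.2 fun z hz => (Ultrafilter.disjoint_iff_not_le.2 (h z hz)).symm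
  exact F.neBot.ne (disjoint_self.1 (hdisj.mono_left hF))

theorem IsClosed.isCompact_of_forall_ultrafilter {A : Set X} (hA : IsClosed A)
    (h : ∀ F : Ultrafilter X, A ∈ F → ∃ z, (F : Filter X) ≤ 𝓝 z) : IsCompact A :=
  isCompact_iff_ultrafilter_le_nhds.2 fun F hF =>
    let ⟨z, hz⟩ := h F (le_principal_iff.1 hF)
    ⟨z, hA.closure_subset (mem_closure_iff_ultrafilter.2 ⟨F, le_principal_iff.1 hF, hz⟩), hz⟩

theorem LocallyCompactSpace.of_forall_ultrafilter [RegularSpace X]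
    (h : ∀ x : X, ∃ U ∈ 𝓝 x, ∀ F : Ultrafilter X, U ∈ F → ∃ z, (F : Filter X) ≤ 𝓝 z) :
    LocallyCompactSpace X := by
  suffices WeaklyLocallyCompactSpace X from inferInstance
  refine ⟨fun x => ?_⟩
  obtain ⟨U, hU, hconv⟩ := h x
  obtain ⟨A, hA, hAc, hAU⟩ := exists_mem_nhds_isClosed_subset hU
  exact ⟨A, hAc.isCompact_of_forall_ultrafilter fun F hF => hconv F (mem_of_superset hF hAU), hA⟩

theorem IsOpenMap.exists_isCompact_image_eq_univ [WeaklyLocallyCompactSpace X] [CompactSpace Y]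
    {f : X → Y} (hf : IsOpenMap f) (hsurj : Function.Surjective f) :
    ∃ K, IsCompact K ∧ f '' K = univ := by
  choose L hLc hL using exists_compact_mem_nhds (X := X)
  obtain ⟨t, ht⟩ := CompactSpace.elim_nhds_subcover (fun y => f '' L (Function.surjInv hsurj y))
    fun y => by
      simpa only [Function.surjInv_eq hsurj] using hf.image_mem_nhds (hL (Function.surjInv hsurj y))
  exact ⟨⋃ y ∈ t, L (Function.surjInv hsurj y), t.isCompact_biUnion fun y _ => hLc _,
    by simpa [image_iUnion₂] using ht⟩

theorem secondCountableTopology_of_isCompact_metrizableSpace [WeaklyLocallyCompactSpace X]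
    [SigmaCompactSpace X] (h : ∀ K : Set X, IsCompact K → MetrizableSpace K) :
    SecondCountableTopology X := by
  choose L hLc hL using fun n => exists_compact_superset (isCompact_compactCovering X n)
  have (n : ℕ) : SecondCountableTopology (interior (L n)) := by
    have := h _ (hLc n)
    have := isCompact_iff_compactSpace.1 (hLc n)
    exact (IsEmbedding.inclusion interior_subset).secondCountableTopology
  exact secondCountableTopology_of_countable_cover (U := fun n => interior (L n))
    (fun _ => isOpen_interior) (eq_univ_of_univ_subset (iUnion_compactCovering X ▸ iUnion_mono hL))

end General

theorem inter_iUnion_smul_subset {G X : Type*} [Group G] [MulAction G X] (U V : Set X) :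
    U ∩ ⋃ g : G, g • V ⊆ {g : G | (g • U ∩ V).Nonempty}⁻¹ • V := by
  rintro z ⟨hzU, hz⟩
  obtain ⟨g, w, hw, rfl⟩ := mem_iUnion.1 hz
  exact ⟨g, ⟨w, ⟨g • w, hzU, inv_smul_smul g w⟩, hw⟩, w, hw, rfl⟩

section Action

variable {G X : Type*} [Group G] [TopologicalSpace G] [TopologicalSpace X] [MulAction G X]
  [ContinuousSMul G X]

theorem IsCompact.exists_le_nhds_of_forall_smul_mem {C : Set G} (hC : IsCompact C) {y : X}
    (F : Ultrafilter X) (hF : ∀ W ∈ 𝓝 y, C • W ∈ F) : ∃ z, (F : Filter X) ≤ 𝓝 z := by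
  have hle : ↑F ≤ 𝓝ˢ ((· • y) '' C) := by
    intro O hO
    rw [mem_nhdsSet_iff_forall, forall_mem_image] at hO
    have : ∀ᶠ w in 𝓝 y, ∀ c ∈ C, c • w ∈ O := hC.eventually_forall_of_forall_eventually
      fun c hc => (continuous_snd.smul continuous_fst).continuousAt.preimage_mem_nhds (hO hc)
    exact mem_of_superset (hF _ this) (by rintro _ ⟨c, hc, w, hw, rfl⟩; exact hw c hc)
  obtain ⟨z, -, hz⟩ :=
    F.exists_le_nhds_of_le_nhdsSet (hC.image (continuous_id.smul continuous_const)) hle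
  exact ⟨z, hz⟩

theorem MulAction.sigmaCompactSpace_of_isCompact_image_mk_eq_univ [SigmaCompactSpace G]
    {K : Set X} (hK : IsCompact K) (hKπ : Quotient.mk (orbitRel G X) '' K = univ) :
    SigmaCompactSpace X := by
  have : CompactSpace K := isCompact_iff_compactSpace.1 hK
  rw [← isSigmaCompact_univ_iff]
  convert isSigmaCompact_range (f := fun p : G × K => p.1 • (p.2 : X)) (by fun_prop)
  refine (eq_univ_of_forall fun z => ?_).symm
  obtain ⟨k, hk, hkz⟩ := hKπ.symm ▸ mem_univ (Quotient.mk _ z)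
  obtain ⟨g, rfl⟩ := Quotient.exact hkz.symm
  exact ⟨(g, ⟨k, hk⟩), rfl⟩

theorem BourbakiProper.exists_mem_nhds_forall_ultrafilter_le_nhds [IsTopologicalGroup G]
    [CompactSpace (Quotient (MulAction.orbitRel G X))] (hproper : BourbakiProper G X) (x : X) :
    ∃ U ∈ 𝓝 x, ∀ F : Ultrafilter X, U ∈ F → ∃ z, (F : Filter X) ≤ 𝓝 z := by
  let π := Quotient.mk (MulAction.orbitRel G X)
  have hπ : IsOpenMap π := MulAction.isOpenQuotientMap_quotientMk.isOpenMap
  choose U V hUo hVo hxU hyV hC using hproper x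
  obtain ⟨t, ht⟩ := isCompact_univ.elim_finite_subcover (fun y => π '' V y)
    (fun y => hπ _ (hVo y)) fun q _ => mem_iUnion.2 ⟨q.out, q.out, hyV _, q.out_eq⟩
  refine ⟨⋂ y ∈ t, U y, (biInter_finset_mem t).2 fun y _ => (hUo y).mem_nhds (hxU y),
    fun F hF => ?_⟩
  obtain ⟨y₀, hy₀, y, hy, hyF⟩ := mem_iUnion₂.1 (ht (mem_univ (F.map π).lim))
  refine (hC y₀).inv.exists_le_nhds_of_forall_smul_mem (y := y) F fun W hW => ?_
  obtain ⟨W', hW'W, hW'o, hyW'⟩ := mem_nhds_iff.1 (inter_mem hW ((hVo y₀).mem_nhds hy))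
  have hsat : ⋃ g : G, g • W' ∈ F := by
    change ⋃ g : G, (g • ·) '' W' ∈ F
    rw [← MulAction.quotient_preimage_image_eq_union_mul W']
    exact (F.map π).le_nhds_lim (hyF ▸ (hπ _ hW'o).mem_nhds (mem_image_of_mem π hyW'))
  refine mem_of_superset (inter_mem (mem_of_superset hF (biInter_subset_of_mem hy₀)) hsat)
    ((inter_iUnion_smul_subset _ _).trans (smul_subset_smul ?_ (hW'W.trans inter_subset_left)))
  exact inv_subset_inv.2 (subset_closure.trans' fun g ⟨z, hzU, hzW'⟩ => ⟨z, hzU, (hW'W hzW').2⟩)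

end Action

theorem stmt_2_general {G X : Type*} [Group G] [TopologicalSpace G] [IsTopologicalGroup G]
    [LocallyCompactSpace G] [SecondCountableTopology G]
    [TopologicalSpace X] [MulAction G X] [ContinuousSMul G X]
    [CompletelyRegularSpace X]
    (hmet : ∀ K : Set X, IsCompact K → TopologicalSpace.MetrizableSpace K)
    (hproper : BourbakiProper G X)
    [CompactSpace (Quotient (MulAction.orbitRel G X))] :
    LocallyCompactSpace X ∧ SecondCountableTopology X := by
  have : LocallyCompactSpace X :=
    .of_forall_ultrafilter hproper.exists_mem_nhds_forall_ultrafilter_le_nhds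
  obtain ⟨K, hK, hKπ⟩ :=
    MulAction.isOpenQuotientMap_quotientMk.isOpenMap.exists_isCompact_image_eq_univ
      (Quotient.mk_surjective (s := MulAction.orbitRel G X))
  have : SigmaCompactSpace X := MulAction.sigmaCompactSpace_of_isCompact_image_mk_eq_univ hK hKπ
  exact ⟨inferInstance, secondCountableTopology_of_isCompact_metrizableSpace hmet⟩

/-- A proper G-space (completely regular, compact subsets metrizable,
paracompact Hausdorff quotient) with compact quotient is locally compact and
second countable. -/
theorem stmt_2 {G X : Type*} [Group G] [TopologicalSpace G] [IsTopologicalGroup G]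
    [LocallyCompactSpace G] [T2Space G] [SecondCountableTopology G]
    [TopologicalSpace X] [MulAction G X] [ContinuousSMul G X]
    [CompletelyRegularSpace X]
    (hmet : ∀ K : Set X, IsCompact K → TopologicalSpace.MetrizableSpace K)
    [ParacompactSpace (Quotient (MulAction.orbitRel G X))]
    [T2Space (Quotient (MulAction.orbitRel G X))]
    (hproper : BourbakiProper G X)
    [CompactSpace (Quotient (MulAction.orbitRel G X))] :
    LocallyCompactSpace X ∧ SecondCountableTopology X :=
  stmt_2_general hmet hproper
end

section
/- With the above setup, the action of G on P_c(G) by left translation is proper in Bourbaki's sense: for any μ, ν ∈ P_c(G) there are open neighbourhoods U_μ, U_ν in P_c(G) such that {g ∈ G : gU_μ ∩ U_ν ≠ ∅} has compact closure in G. -/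
open MeasureTheory Topology
open scoped ENNReal Pointwise

/-!
Take relatively compact open sets `A ⊇ supp μ` and `B ⊇ supp ν`, and let `U`, `V` be the sets of
measures giving `Aᶜ`, resp. `Bᶜ`, mass `< 1/2`. They are open by the portmanteau theorem, since
the mass of a closed set is upper semicontinuous in the weak topology. If `ρ ∈ U` and `gρ ∈ V`,
then `A` and `g⁻¹B` each carry more than half of the mass of `ρ`, so they meet, and
`g ∈ B A⁻¹ ⊆ closure B * (closure A)⁻¹`, which is compact.
-/

/-- The set of compactly supported probability measures P_c(G) = ⋃ᵢ P(Kᵢ), realised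
as measures on G giving full mass to some member of the exhausting family K. -/
def PcCarrier {G : Type*} [MeasurableSpace G] (K : ℕ → Set G) : Type _ :=
  {μ : Measure G // IsProbabilityMeasure μ ∧ ∃ n, μ (K n)ᶜ = 0}

theorem MeasureTheory.ProbabilityMeasure.isOpen_setOf_measure_lt {Ω : Type*} [MeasurableSpace Ω]
    [TopologicalSpace Ω] [OpensMeasurableSpace Ω] [HasOuterApproxClosed Ω] {F : Set Ω}
    (hF : IsClosed F) (c : ℝ≥0∞) :
    IsOpen {σ : ProbabilityMeasure Ω | (σ : Measure Ω) F < c} := by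
  refine isOpen_iff_mem_nhds.2 fun σ hσ ↦ Filter.eventually_lt_of_limsup_lt ?_
  exact (limsup_measure_closed_le_of_tendsto Filter.tendsto_id hF).trans_lt hσ

theorem MeasureTheory.inter_nonempty_of_measure_compl_lt_half {Ω : Type*} [MeasurableSpace Ω]
    (ρ : Measure Ω) [IsProbabilityMeasure ρ] {A B : Set Ω}
    (hA : ρ Aᶜ < 1 / 2) (hB : ρ Bᶜ < 1 / 2) : (A ∩ B).Nonempty := by
  rw [Set.nonempty_iff_ne_empty]
  intro hAB
  have : ρ (Aᶜ ∪ Bᶜ) < 1 :=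
    calc ρ (Aᶜ ∪ Bᶜ) ≤ ρ Aᶜ + ρ Bᶜ := measure_union_le _ _
      _ < 1 / 2 + 1 / 2 := ENNReal.add_lt_add hA hB
      _ = 1 := ENNReal.add_halves 1
  rw [← Set.compl_inter, hAB, Set.compl_empty, measure_univ] at this
  exact lt_irrefl _ this

theorem MeasureTheory.mem_mul_inv_of_measure_compl_lt_half {G : Type*} [Group G]
    [MeasurableSpace G] (ρ : Measure G) [IsProbabilityMeasure ρ] {A B : Set G} {g : G}
    (hA : ρ Aᶜ < 1 / 2) (hB : ρ ((g * ·) ⁻¹' B)ᶜ < 1 / 2) : g ∈ B * A⁻¹ := by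
  obtain ⟨x, hxA, hxB⟩ := inter_nonempty_of_measure_compl_lt_half ρ hA hB
  simpa using Set.mul_mem_mul (show g * x ∈ B from hxB) (Set.inv_mem_inv.2 hxA)

theorem PcCarrier.isOpen_setOf_measure_lt {G : Type*} [TopologicalSpace G]
    [TopologicalSpace.PseudoMetrizableSpace G] [MeasurableSpace G] [OpensMeasurableSpace G]
    {K : ℕ → Set G} [TopologicalSpace (PcCarrier K)]
    (j : ∀ n, ProbabilityMeasure (K n) → PcCarrier K)
    (hj : ∀ n (μ : ProbabilityMeasure (K n)) (U : Set G), MeasurableSet U →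
      (j n μ).1 U = (μ : Measure (K n)) (Subtype.val ⁻¹' U))
    (hτ : ∀ U : Set (PcCarrier K), (∀ n, IsOpen (j n ⁻¹' U)) → IsOpen U)
    {F : Set G} (hF : IsClosed F) (c : ℝ≥0∞) :
    IsOpen {ρ : PcCarrier K | ρ.1 F < c} := by
  refine hτ _ fun n ↦ ?_
  have hpre : j n ⁻¹' {ρ : PcCarrier K | ρ.1 F < c} =
      {σ : ProbabilityMeasure (K n) | (σ : Measure (K n)) (Subtype.val ⁻¹' F) < c} := by
    ext σ
    simp only [Set.mem_preimage, Set.mem_ofPred_eq, hj n σ F hF.measurableSet]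
  rw [hpre]
  exact ProbabilityMeasure.isOpen_setOf_measure_lt (hF.preimage continuous_subtype_val) c

theorem stmt_8_general {G : Type*} [Group G] [TopologicalSpace G] [IsTopologicalGroup G]
    [LocallyCompactSpace G] [SecondCountableTopology G]
    [MeasurableSpace G] [BorelSpace G]
    (K : ℕ → Set G) (hcpt : ∀ n, IsCompact (K n))
    [τ : TopologicalSpace (PcCarrier K)]
    (j : ∀ n, ProbabilityMeasure (K n) → PcCarrier K)
    (hj : ∀ n (μ : ProbabilityMeasure (K n)) (U : Set G), MeasurableSet U →
      (j n μ).1 U = (μ : Measure (K n)) (Subtype.val ⁻¹' U))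
    (hτ : ∀ U : Set (PcCarrier K), IsOpen U ↔ ∀ n, IsOpen (j n ⁻¹' U))
    (act : G → PcCarrier K → PcCarrier K)
    (hact : ∀ (g : G) (ν : PcCarrier K) (U : Set G), MeasurableSet U →
      (act g ν).1 U = ν.1 ((g * ·) ⁻¹' U)) :
    ∀ μ ν : PcCarrier K, ∃ U V : Set (PcCarrier K), IsOpen U ∧ IsOpen V ∧
      μ ∈ U ∧ ν ∈ V ∧ IsCompact (closure {g : G | (act g '' U ∩ V).Nonempty}) := by
  intro μ ν
  obtain ⟨-, m, hμ⟩ := μ.2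
  obtain ⟨-, p, hν⟩ := ν.2
  obtain ⟨A, hAo, hKA, hAc⟩ := exists_isOpen_superset_and_isCompact_closure (hcpt m)
  obtain ⟨B, hBo, hKB, hBc⟩ := exists_isOpen_superset_and_isCompact_closure (hcpt p)
  have hopen {F : Set G} (hF : IsClosed F) : IsOpen {ρ : PcCarrier K | ρ.1 F < 1 / 2} :=
    PcCarrier.isOpen_setOf_measure_lt j hj (fun U ↦ (hτ U).2) hF _
  refine ⟨_, _, hopen hAo.isClosed_compl, hopen hBo.isClosed_compl, ?_, ?_, ?_⟩
  · simp [measure_mono_null (Set.compl_subset_compl.2 hKA) hμ]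
  · simp [measure_mono_null (Set.compl_subset_compl.2 hKB) hν]
  refine (hBc.mul hAc.inv).closure_of_subset ?_
  rintro g ⟨_, ⟨ρ, hρA, rfl⟩, hρB⟩
  have := ρ.2.1
  have hgB : ρ.1 ((g * ·) ⁻¹' B)ᶜ < 1 / 2 := by
    rwa [Set.mem_ofPred_eq, hact g ρ _ hBo.isClosed_compl.measurableSet, Set.preimage_compl]
      at hρB
  exact Set.mul_subset_mul subset_closure (Set.inv_subset_inv.2 subset_closure)
    (mem_mul_inv_of_measure_compl_lt_half ρ.1 hρA hgB)

/-- the left translation action of G on P_c(G) (direct limit topology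
over the weak* topologies on the P(Kᵢ)) is proper in Bourbaki's sense. -/
theorem stmt_8 {G : Type*} [Group G] [TopologicalSpace G] [IsTopologicalGroup G]
    [LocallyCompactSpace G] [SecondCountableTopology G] [T2Space G]
    [MeasurableSpace G] [BorelSpace G]
    (K : ℕ → Set G) (hmono : Monotone K) (hcpt : ∀ n, IsCompact (K n))
    (hcover : ⋃ n, K n = Set.univ)
    (hcof : ∀ C : Set G, IsCompact C → ∃ n, C ⊆ K n)
    [τ : TopologicalSpace (PcCarrier K)]
    (j : ∀ n, ProbabilityMeasure (K n) → PcCarrier K)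
    (hj : ∀ n (μ : ProbabilityMeasure (K n)) (U : Set G), MeasurableSet U →
      (j n μ).1 U = (μ : Measure (K n)) (Subtype.val ⁻¹' U))
    (hjall : ∀ ν : PcCarrier K, ∃ n μ, j n μ = ν)
    (hτ : ∀ U : Set (PcCarrier K), IsOpen U ↔ ∀ n, IsOpen (j n ⁻¹' U))
    (act : G → PcCarrier K → PcCarrier K)
    (hact : ∀ (g : G) (ν : PcCarrier K) (U : Set G), MeasurableSet U →
      (act g ν).1 U = ν.1 ((g * ·) ⁻¹' U)) :
    ∀ μ ν : PcCarrier K, ∃ U V : Set (PcCarrier K), IsOpen U ∧ IsOpen V ∧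
      μ ∈ U ∧ ν ∈ V ∧ IsCompact (closure {g : G | (act g '' U ∩ V).Nonempty}) :=
  stmt_8_general K hcpt (τ := τ) j hj hτ act hact
end

section
/- Let G be a locally compact Hausdorff group with left Haar measure, H an open subgroup, and X a locally compact proper H-space contained in P_c(H) ⊆ P_c(G) (so each x ∈ X is a compactly supported probability measure on H). Then the natural G-map F : G ×_H X → G·X, [g, x] ↦ gx, is a G-equivariant homeomorphism. -/
/-!
A measure `x ∈ X` lives on `H`, so its translate `g • x` gives mass one to the coset `gH` and mass
zero to every other coset. Thus `g • x` determines the coset `gH`, which makes `F` injective, and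
on the open set of measures charging `g₀H` the inverse of `F` is `ν ↦ [g₀, g₀⁻¹ • ν]`, which makes
`F` open. Continuity of `F` comes from joint continuity of the translation action on `P_c(G)`;
by the direct limit topology it suffices to check it on each `G × P(C)`.
-/

open MeasureTheory Function Topology

/-- The compactly supported Borel probability measures on G (the carrier of P_c(G)). -/
def CPM (G : Type*) [TopologicalSpace G] [MeasurableSpace G] : Type _ :=
  {μ : Measure G // IsProbabilityMeasure μ ∧ ∃ C : Set G, IsCompact C ∧ μ Cᶜ = 0}

open scoped Pointwise ENNReal NNReal
open BoundedContinuousFunction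

namespace MeasureTheory.ProbabilityMeasure

variable {Ω : Type*} [MeasurableSpace Ω] [TopologicalSpace Ω] [OpensMeasurableSpace Ω]

theorem continuous_testAgainstNN :
    Continuous fun p : (Ω →ᵇ ℝ≥0) × ProbabilityMeasure Ω =>
      p.2.toFiniteMeasure.testAgainstNN p.1 :=
  continuous_prod_of_continuous_lipschitzWith _ 1 continuous_testAgainstNN_eval
    testAgainstNN_lipschitz

theorem continuous_map_curry [BorelSpace Ω] {α β : Type*} [TopologicalSpace α]
    [TopologicalSpace β] [CompactSpace β] [MeasurableSpace β] [OpensMeasurableSpace β]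
    (a : C(α × β, Ω)) :
    Continuous fun p : α × ProbabilityMeasure β =>
      p.2.map (a.curry p.1).continuous.aemeasurable := by
  refine continuous_iff_continuousAt.2 fun p₀ => ?_
  refine (ProbabilityMeasure.tendsto_iff_forall_lintegral_tendsto).2 fun f => ?_
  let φ : α → (β →ᵇ ℝ≥0) := fun x =>
    ContinuousMap.equivBoundedOfCompact β ℝ≥0 (f.toContinuousMap.comp (a.curry x))
  have hφ : Continuous φ :=
    (ContinuousMap.isUniformInducing_equivBoundedOfCompact β ℝ≥0).uniformContinuous.continuous.comp
      ((ContinuousMap.continuous_postcomp f.toContinuousMap).comp a.curry.continuous)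
  have hint : ∀ p : α × ProbabilityMeasure β,
      ∫⁻ ω, f ω ∂(p.2.map (a.curry p.1).continuous.aemeasurable : Measure Ω) =
        p.2.toFiniteMeasure.testAgainstNN (φ p.1) := by
    intro p
    rw [ProbabilityMeasure.toMeasure_map, lintegral_map (by fun_prop)
      (a.curry p.1).continuous.measurable, FiniteMeasure.testAgainstNN_coe_eq]
    rfl
  simp_rw [hint, ENNReal.tendsto_coe]
  exact (continuous_testAgainstNN.comp ((hφ.comp continuous_fst).prodMk continuous_snd)).tendsto p₀

end MeasureTheory.ProbabilityMeasure

namespace CPM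

variable {G : Type*} [TopologicalSpace G] [MeasurableSpace G]

instance (ν : CPM G) : IsProbabilityMeasure ν.1 := ν.2.1

theorem ext {μ ν : CPM G} (h : ∀ U, MeasurableSet U → μ.1 U = ν.1 U) : μ = ν :=
  Subtype.ext (Measure.ext h)

section Action

variable [Group G] [MeasurableMul G] [ContinuousMul G]

noncomputable instance : SMul G (CPM G) where
  smul g ν := ⟨ν.1.map (MeasurableEquiv.mulLeft g),
    Measure.isProbabilityMeasure_map (MeasurableEquiv.mulLeft g).measurable.aemeasurable, by
      obtain ⟨C, hC, hνC⟩ := ν.2.2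
      refine ⟨g • C, hC.smul g, ?_⟩
      rw [MeasurableEquiv.map_apply]
      convert hνC using 2
      ext x
      simp [mem_leftCoset_iff]⟩

theorem smul_apply (g : G) (ν : CPM G) (U : Set G) : (g • ν).1 U = ν.1 ((g * ·) ⁻¹' U) :=
  MeasurableEquiv.map_apply _ _

noncomputable instance : MulAction G (CPM G) where
  one_smul ν := ext fun U _ => by simp [smul_apply]
  mul_smul g h ν := ext fun U _ => by simp [smul_apply, Set.preimage_preimage, mul_assoc]

variable {H : Subgroup G} {ν : CPM G}

theorem smul_apply_smul_subgroup (hH : MeasurableSet (H : Set G)) (hν : ν.1 (H : Set G)ᶜ = 0)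
    (g : G) : (g • ν).1 (g • (H : Set G)) = 1 := by
  rw [smul_apply]
  convert (prob_compl_eq_zero_iff hH).1 hν using 2
  ext x
  simp [mem_leftCoset_iff]

theorem inv_mul_mem_of_smul_apply_smul_subgroup_ne_zero (hν : ν.1 (H : Set G)ᶜ = 0) {g g₀ : G}
    (h : (g • ν).1 (g₀ • (H : Set G)) ≠ 0) : g₀⁻¹ * g ∈ H := by
  contrapose! h
  rw [smul_apply]
  refine measure_mono_null (fun y (hy : g * y ∈ g₀ • (H : Set G)) (hyH : y ∈ H) => h ?_) hν
  rw [mem_leftCoset_iff, ← mul_assoc] at hy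
  simpa using H.mul_mem hy (H.inv_mem hyH)

end Action

section DirectLimit

variable [OpensMeasurableSpace G] [T2Space G]

noncomputable def ofProbabilityMeasure (C : Set G) (hC : IsCompact C) (μ : ProbabilityMeasure C) :
    CPM G :=
  ⟨(μ : Measure C).map (↑), Measure.isProbabilityMeasure_map measurable_subtype_coe.aemeasurable,
    C, hC, by
      rw [Measure.map_apply measurable_subtype_coe hC.isClosed.measurableSet.compl]
      simp⟩

theorem ofProbabilityMeasure_apply {C : Set G} (hC : IsCompact C) (μ : ProbabilityMeasure C)
    {U : Set G} (hU : MeasurableSet U) :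
    (ofProbabilityMeasure C hC μ).1 U = (μ : Measure C) (Subtype.val ⁻¹' U) :=
  Measure.map_apply measurable_subtype_coe hU

noncomputable def ofSigma (s : Σ K : {C : Set G // IsCompact C}, ProbabilityMeasure K.1) : CPM G :=
  ofProbabilityMeasure s.1.1 s.1.2 s.2

theorem ofSigma_surjective : Surjective (ofSigma (G := G)) := by
  rintro ⟨ν, hν, C, hC, hνC⟩
  have hCm : MeasurableSet C := hC.isClosed.measurableSet
  have hemb : MeasurableEmbedding ((↑) : C → G) := .subtype_coe hCm
  have : IsProbabilityMeasure (ν.comap ((↑) : C → G)) :=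
    ⟨by rw [hemb.comap_apply, Set.image_univ, Subtype.range_coe, ← prob_compl_eq_zero_iff hCm, hνC]⟩
  refine ⟨⟨⟨C, hC⟩, ⟨ν.comap (↑), this⟩⟩, Subtype.ext ?_⟩
  change (ν.comap _).map _ = ν
  rw [hemb.map_comap, Subtype.range_coe, Measure.restrict_eq_self_of_ae_mem]
  simpa using measure_eq_zero_iff_ae_notMem.1 hνC

/-- The direct limit topology of `P_c(G) = ⋃ P(C)` over the compact sets `C ⊆ G`. -/
noncomputable instance directLimitTopology : TopologicalSpace (CPM G) :=
  TopologicalSpace.coinduced ofSigma inferInstance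

theorem isQuotientMap_ofSigma : IsQuotientMap (ofSigma (G := G)) :=
  ⟨⟨rfl⟩, ofSigma_surjective⟩

theorem isOpen_iff {U : Set (CPM G)} :
    IsOpen U ↔ ∀ C (hC : IsCompact C), IsOpen (ofProbabilityMeasure C hC ⁻¹' U) :=
  isOpen_sigma_iff.trans ⟨fun h C hC => h ⟨C, hC⟩, fun h K => h K.1 K.2⟩

theorem continuous_ofProbabilityMeasure {C : Set G} (hC : IsCompact C) :
    Continuous (ofProbabilityMeasure C hC) :=
  continuous_def.2 fun _ hU => isOpen_iff.1 hU C hC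

theorem isOpen_setOf_lt_apply [TopologicalSpace.PseudoMetrizableSpace G] {V : Set G}
    (hV : IsOpen V) (c : ℝ≥0∞) : IsOpen {ν : CPM G | c < ν.1 V} := by
  refine isOpen_iff.2 fun C hC => ?_
  have hpre : ofProbabilityMeasure C hC ⁻¹' {ν | c < ν.1 V} =
      {μ : ProbabilityMeasure C | c < (μ : Measure C) (Subtype.val ⁻¹' V)} := by
    ext μ
    simp only [Set.mem_preimage, Set.mem_ofPred_eq,
      ofProbabilityMeasure_apply hC μ hV.measurableSet]
  rw [hpre, isOpen_iff_mem_nhds]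
  intro μ₀ hμ₀
  exact Filter.eventually_lt_of_lt_liminf (hμ₀.trans_le
    (ProbabilityMeasure.le_liminf_measure_open_of_tendsto Filter.tendsto_id
      (hV.preimage continuous_subtype_val)))

end DirectLimit

section ContinuousAction

variable [Group G] [IsTopologicalGroup G] [BorelSpace G] [T2Space G]

theorem smul_ofProbabilityMeasure {C D : Set G} (hC : IsCompact C) (hD : IsCompact D) {g : G}
    {f : C → D} (hf : Measurable f) (hfg : ∀ c, (f c : G) = g * c) (μ : ProbabilityMeasure C) :
    g • ofProbabilityMeasure C hC μ = ofProbabilityMeasure D hD (μ.map hf.aemeasurable) := by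
  refine ext fun U hU => ?_
  rw [smul_apply, ofProbabilityMeasure_apply hC μ (measurable_const_mul g hU),
    ofProbabilityMeasure_apply hD _ hU, ProbabilityMeasure.toMeasure_map,
    Measure.map_apply hf (measurable_subtype_coe hU)]
  congr 1
  ext c
  simp [hfg]

variable [LocallyCompactSpace G]

theorem continuous_smul_ofProbabilityMeasure {C : Set G} (hC : IsCompact C) :
    Continuous fun p : G × ProbabilityMeasure C => p.1 • ofProbabilityMeasure C hC p.2 := by
  have : CompactSpace C := isCompact_iff_compactSpace.mp hC
  refine continuous_iff_continuousAt.2 fun p₀ => ?_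
  obtain ⟨K, hK, hK₀⟩ := exists_compact_mem_nhds p₀.1
  -- near `p₀`, all translates of measures on `C` live on the compact set `K * C`
  let a : C(K × C, ↥(K * C)) :=
    ⟨fun p => ⟨p.1 * p.2, Set.mul_mem_mul p.1.2 p.2.2⟩, by fun_prop⟩
  have hmap : Continuous fun p : K × ProbabilityMeasure C => ofProbabilityMeasure _ (hK.mul hC)
      (p.2.map (a.curry p.1).continuous.aemeasurable) :=
    (continuous_ofProbabilityMeasure _).comp (ProbabilityMeasure.continuous_map_curry a)
  refine ContinuousOn.continuousAt ?_ (prod_mem_nhds hK₀ Filter.univ_mem)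
  rw [continuousOn_iff_continuous_domRestrict]
  convert hmap.comp (f := fun p : ↥(K ×ˢ Set.univ) => ((⟨p.1.1, p.2.1⟩ : K), p.1.2))
    (by fun_prop) using 1
  funext p
  exact smul_ofProbabilityMeasure hC (hK.mul hC) (a.curry _).continuous.measurable (fun _ => rfl) _

instance : ContinuousSMul G (CPM G) where
  continuous_smul := by
    refine isQuotientMap_ofSigma.continuous_lift_prod_right ?_
    have hσ : Continuous fun q : Σ K : {C : Set G // IsCompact C}, ProbabilityMeasure K.1 × G =>
        q.2.2 • ofSigma ⟨q.1, q.2.1⟩ :=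
      continuous_sigma fun K => (continuous_smul_ofProbabilityMeasure K.2).comp continuous_swap
    exact hσ.comp (Homeomorph.sigmaProdDistrib.continuous.comp continuous_swap)

end ContinuousAction

section InducedSpace

variable [Group G] [MeasurableMul G] [ContinuousMul G] {H : Subgroup G} {X : Set (CPM G)}
  {Q : Type*} {π : G × X → Q}
  {F : Q → {ν : CPM G | ∃ g : G, ∃ x ∈ X, ν = g • x}}

theorem inducedMap_smul (hπsurj : Surjective π) {aQ : G → Q → Q}
    (haQ : ∀ (g' g : G) (x : X), aQ g' (π (g, x)) = π (g' * g, x))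
    (hF : ∀ (g : G) (x : X), (F (π (g, x)) : CPM G) = g • (x : CPM G)) (g : G) (q : Q) :
    (F (aQ g q) : CPM G) = g • (F q : CPM G) := by
  obtain ⟨⟨g', x⟩, rfl⟩ := hπsurj q
  rw [haQ, hF, hF, mul_smul]

theorem surjective_inducedMap
    (hF : ∀ (g : G) (x : X), (F (π (g, x)) : CPM G) = g • (x : CPM G)) : Surjective F := by
  rintro ⟨_, g, x, hx, rfl⟩
  exact ⟨π (g, ⟨x, hx⟩), Subtype.ext (hF g ⟨x, hx⟩)⟩

theorem injective_inducedMap (hH : MeasurableSet (H : Set G))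
    (hXH : ∀ ν ∈ X, ν.1 (H : Set G)ᶜ = 0) (hπsurj : Surjective π)
    (hπ : ∀ (g g' : G) (x x' : X), π (g, x) = π (g', x') ↔
      ∃ h ∈ H, g' = g * h⁻¹ ∧ (x' : CPM G) = h • (x : CPM G))
    (hF : ∀ (g : G) (x : X), (F (π (g, x)) : CPM G) = g • (x : CPM G)) : Injective F := by
  intro q q' hq
  obtain ⟨⟨g, x⟩, rfl⟩ := hπsurj q
  obtain ⟨⟨g', x'⟩, rfl⟩ := hπsurj q'
  have hgx : g • (x : CPM G) = g' • (x' : CPM G) := by rw [← hF, ← hF, hq]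
  have hmem : g'⁻¹ * g ∈ H := by
    refine inv_mul_mem_of_smul_apply_smul_subgroup_ne_zero (hXH x x.2) ?_
    rw [hgx, smul_apply_smul_subgroup hH (hXH x' x'.2)]
    exact one_ne_zero
  refine (hπ g g' x x').2 ⟨g'⁻¹ * g, hmem, by group, ?_⟩
  rw [mul_smul, hgx, inv_smul_smul]

theorem continuous_inducedMap [TopologicalSpace Q] [TopologicalSpace (CPM G)]
    [ContinuousSMul G (CPM G)] (hπ : IsQuotientMap π)
    (hF : ∀ (g : G) (x : X), (F (π (g, x)) : CPM G) = g • (x : CPM G)) : Continuous F := by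
  rw [hπ.continuous_iff]
  exact continuous_induced_rng.2 <| (continuous_fst.smul (continuous_subtype_val.comp
    continuous_snd)).congr fun p => (hF p.1 p.2).symm

end InducedSpace

section InducedSpaceOpen

variable [Group G] [IsTopologicalGroup G] [BorelSpace G] [T2Space G] [LocallyCompactSpace G]
  [TopologicalSpace.PseudoMetrizableSpace G] {H : Subgroup G} {X : Set (CPM G)}
  {Q : Type*} [TopologicalSpace Q] {π : G × X → Q}
  {F : Q → {ν : CPM G | ∃ g : G, ∃ x ∈ X, ν = g • x}}

theorem isOpenMap_inducedMap (hH : IsOpen (H : Set G)) (hXH : ∀ ν ∈ X, ν.1 (H : Set G)ᶜ = 0)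
    (hXinv : ∀ h ∈ H, ∀ ν ∈ X, h • ν ∈ X) (hπsurj : Surjective π) (hπ : Continuous π)
    (hF : ∀ (g : G) (x : X), (F (π (g, x)) : CPM G) = g • (x : CPM G)) : IsOpenMap F := by
  intro O hO
  rw [isOpen_iff_forall_mem_open]
  rintro _ ⟨q₀, hq₀, rfl⟩
  obtain ⟨⟨g₀, x₀⟩, rfl⟩ := hπsurj q₀
  obtain ⟨S, hS, hSO⟩ := isOpen_induced_iff.1 (hO.preimage (hπ.comp (Continuous.prodMk_right g₀)))
  let W := {ν : CPM G | 0 < ν.1 (g₀ • (H : Set G))} ∩ (g₀⁻¹ • ·) ⁻¹' S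
  have hW : IsOpen W :=
    (isOpen_setOf_lt_apply (hH.smul g₀) 0).inter (hS.preimage (continuous_const_smul _))
  refine ⟨Subtype.val ⁻¹' W, ?_, hW.preimage continuous_subtype_val, ?_⟩
  · rintro ⟨_, g, x, hx, rfl⟩ ⟨hmass, hxS⟩
    have hmem := inv_mul_mem_of_smul_apply_smul_subgroup_ne_zero (hXH x hx) hmass.ne'
    have hx' : (g₀⁻¹ * g) • x ∈ X := hXinv _ hmem x hx
    refine ⟨π (g₀, ⟨_, hx'⟩), ?_, Subtype.ext ?_⟩
    · have hxS' : (⟨_, hx'⟩ : X) ∈ Subtype.val ⁻¹' S := by simpa [mul_smul] using hxS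
      rw [hSO] at hxS'
      exact hxS'
    · rw [hF]
      change g₀ • (g₀⁻¹ * g) • x = g • x
      rw [mul_smul, smul_inv_smul]
  · refine ⟨?_, ?_⟩
    · change 0 < (F (π (g₀, x₀)) : CPM G).1 (g₀ • (H : Set G))
      rw [hF, smul_apply_smul_subgroup hH.measurableSet (hXH x₀ x₀.2)]
      exact one_pos
    · change g₀⁻¹ • (F (π (g₀, x₀)) : CPM G) ∈ S
      rw [hF, inv_smul_smul]
      exact (Set.ext_iff.1 hSO x₀).2 hq₀

end InducedSpaceOpen

end CPM

theorem stmt_12_general {G : Type*} [Group G] [TopologicalSpace G] [IsTopologicalGroup G]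
    [LocallyCompactSpace G] [SecondCountableTopology G] [T2Space G]
    [MeasurableSpace G] [BorelSpace G]
    (H : Subgroup G) (hH : IsOpen (H : Set G))
    [τ : TopologicalSpace (CPM G)]
    -- the direct limit topology on P_c(G), via the inclusions P(C) → P_c(G)
    (j : ∀ C : Set G, IsCompact C → ProbabilityMeasure C → CPM G)
    (hj : ∀ (C : Set G) (hC : IsCompact C) (μ : ProbabilityMeasure C) (U : Set G),
      MeasurableSet U → (j C hC μ).1 U = (μ : Measure C) (Subtype.val ⁻¹' U))
    (hτ : ∀ U : Set (CPM G), IsOpen U ↔ ∀ (C : Set G) (hC : IsCompact C),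
      IsOpen (j C hC ⁻¹' U))
    -- the translation action of G on P_c(G): (gμ)(U) = μ(g⁻¹U)
    (act : G → CPM G → CPM G)
    (hact : ∀ (g : G) (ν : CPM G) (U : Set G), MeasurableSet U →
      (act g ν).1 U = ν.1 ((g * ·) ⁻¹' U))
    -- X ⊆ P_c(H): an H-invariant set of measures supported in H
    (X : Set (CPM G)) (hXH : ∀ ν ∈ X, ν.1 ((H : Set G)ᶜ) = 0)
    (hXinv : ∀ h ∈ H, ∀ ν ∈ X, act h ν ∈ X)
    -- the induced space Q = G ×_H X with its quotient topology and G-action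
    (Q : Type*) [TopologicalSpace Q] (π : G × X → Q) (hπsurj : Surjective π)
    (hπ : ∀ (g g' : G) (x x' : X), π (g, x) = π (g', x') ↔
      ∃ h ∈ H, g' = g * h⁻¹ ∧ (x' : CPM G) = act h x)
    (hτQ : ∀ U : Set Q, IsOpen U ↔ IsOpen (π ⁻¹' U))
    (aQ : G → Q → Q) (haQ : ∀ (g' g : G) (x : X), aQ g' (π (g, x)) = π (g' * g, x))
    -- the natural map F : G ×_H X → G·X, [g, x] ↦ g·x
    (F : Q → {ν : CPM G | ∃ g : G, ∃ x ∈ X, ν = act g x})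
    (hF : ∀ (g : G) (x : X), (F (π (g, x)) : CPM G) = act g x) :
    (∀ (g : G) (q : Q), (F (aQ g q) : CPM G) = act g (F q)) ∧
      Continuous F ∧ IsOpenMap F ∧ Function.Bijective F := by
  obtain rfl : act = HSMul.hSMul := funext₂ fun g ν =>
    CPM.ext fun U hU => (hact g ν U hU).trans (CPM.smul_apply g ν U).symm
  obtain rfl : j = CPM.ofProbabilityMeasure := funext₃ fun C hC μ =>
    CPM.ext fun U hU => (hj C hC μ U hU).trans (CPM.ofProbabilityMeasure_apply hC μ hU).symm
  obtain rfl : τ = CPM.directLimitTopology :=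
    TopologicalSpace.ext <| funext fun U => propext <| (hτ U).trans CPM.isOpen_iff.symm
  have hπq : IsQuotientMap π := ⟨isCoinducing_iff.2 fun U => (hτQ U).symm, hπsurj⟩
  exact ⟨CPM.inducedMap_smul hπsurj haQ hF, CPM.continuous_inducedMap hπq hF,
    CPM.isOpenMap_inducedMap hH hXH hXinv hπsurj hπq.continuous hF,
    CPM.injective_inducedMap hH.measurableSet hXH hπsurj hπ hF, CPM.surjective_inducedMap hF⟩

/-- for an open subgroup H ≤ G and a locally compact proper H-space
X ⊆ P_c(H) ⊆ P_c(G), the natural G-map F : G ×_H X → G·X, [g,x] ↦ gx, is a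
G-equivariant homeomorphism.  Here P_c(G) carries the direct limit topology over the
weak*-topologized spaces P(C), C ⊆ G compact; G ×_H X is the quotient of G × X by
h·(g,x) = (gh⁻¹, hx) with the quotient topology, and G·X ⊆ P_c(G) has the subspace
topology. -/
theorem stmt_12 {G : Type*} [Group G] [TopologicalSpace G] [IsTopologicalGroup G]
    [LocallyCompactSpace G] [SecondCountableTopology G] [T2Space G]
    [MeasurableSpace G] [BorelSpace G]
    (μhaar : Measure G) [μhaar.IsHaarMeasure]
    (H : Subgroup G) (hH : IsOpen (H : Set G))
    [τ : TopologicalSpace (CPM G)]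
    -- the direct limit topology on P_c(G), via the inclusions P(C) → P_c(G)
    (j : ∀ C : Set G, IsCompact C → ProbabilityMeasure C → CPM G)
    (hj : ∀ (C : Set G) (hC : IsCompact C) (μ : ProbabilityMeasure C) (U : Set G),
      MeasurableSet U → (j C hC μ).1 U = (μ : Measure C) (Subtype.val ⁻¹' U))
    (hτ : ∀ U : Set (CPM G), IsOpen U ↔ ∀ (C : Set G) (hC : IsCompact C),
      IsOpen (j C hC ⁻¹' U))
    -- the translation action of G on P_c(G): (gμ)(U) = μ(g⁻¹U)
    (act : G → CPM G → CPM G)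
    (hact : ∀ (g : G) (ν : CPM G) (U : Set G), MeasurableSet U →
      (act g ν).1 U = ν.1 ((g * ·) ⁻¹' U))
    -- X ⊆ P_c(H): an H-invariant set of measures supported in H
    (X : Set (CPM G)) (hXH : ∀ ν ∈ X, ν.1 ((H : Set G)ᶜ) = 0)
    (hXinv : ∀ h ∈ H, ∀ ν ∈ X, act h ν ∈ X)
    -- X is a locally compact proper H-space
    (hXlc : LocallyCompactSpace X)
    (hXproper : ∀ x ∈ X, ∀ y ∈ X, ∃ U V : Set (CPM G), IsOpen U ∧ IsOpen V ∧
      x ∈ U ∧ y ∈ V ∧ IsCompact (closure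
        {h : G | h ∈ H ∧ ((act h '' (U ∩ X)) ∩ (V ∩ X)).Nonempty}))
    -- the induced space Q = G ×_H X with its quotient topology and G-action
    (Q : Type*) [TopologicalSpace Q] (π : G × X → Q) (hπsurj : Surjective π)
    (hπ : ∀ (g g' : G) (x x' : X), π (g, x) = π (g', x') ↔
      ∃ h ∈ H, g' = g * h⁻¹ ∧ (x' : CPM G) = act h x)
    (hτQ : ∀ U : Set Q, IsOpen U ↔ IsOpen (π ⁻¹' U))
    (aQ : G → Q → Q) (haQ : ∀ (g' g : G) (x : X), aQ g' (π (g, x)) = π (g' * g, x))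
    -- the natural map F : G ×_H X → G·X, [g, x] ↦ g·x
    (F : Q → {ν : CPM G | ∃ g : G, ∃ x ∈ X, ν = act g x})
    (hF : ∀ (g : G) (x : X), (F (π (g, x)) : CPM G) = act g x) :
    (∀ (g : G) (q : Q), (F (aQ g q) : CPM G) = act g (F q)) ∧
      Continuous F ∧ IsOpenMap F ∧ Function.Bijective F :=
  stmt_12_general H hH (τ := τ) j hj hτ act hact X hXH hXinv Q π hπsurj hπ hτQ aQ haQ F hF
end

section
/- Let G be a locally compact group, H an open subgroup, X a proper H-space with cutoff function c : X → ℝ≥0 (for the H-action). Define i(c) on the induced space G ×_H X by i(c)[g, x] = c(gx) if g ∈ H and 0 otherwise. Then i(c) is a well-defined cutoff function for the proper G-action on G ×_H X (up to normalization of Haar measures): ∫_G i(c)(g⁻¹·[g₀, x]) dg = 1 for every [g₀, x], and supp(i(c)) ∩ G·K is compact for every compact K ⊆ G ×_H X. -/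
/-!
The map `x ↦ [1, x]` is a closed and open embedding of `X` into `G ×_H X` (its range is the
clopen image of `H × X`, `H` being open and hence closed), and `i(c)` is the extension of `c`
by zero along it. This gives continuity and identifies `tsupport i(c)` with the image of
`tsupport c`. Left invariance of Haar measure turns the integral over `G` at `[g₀, x]` into the
integral of `c (h⁻¹ • x)` over `H`. A compact `K ⊆ G ×_H X` is covered by finitely many
translates `g • [1, X]`, so `G • K = G • [1, P]` for a compact `P ⊆ X`, and `[1, ·]` pulls
`G • [1, P]` back to `H • P`; hence `tsupport i(c) ∩ G • K` is the image of the compact set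
`tsupport c ∩ H • P`.
-/

open MeasureTheory Pointwise Function Classical

open Set Topology

section ExtensionByZero

variable {X Q M : Type*} [TopologicalSpace X] [TopologicalSpace Q] [Zero M]
  {j : X → Q} {f : Q → M}

theorem Topology.IsClosedEmbedding.tsupport_eq_image_of_support_subset_range
    (hj : IsClosedEmbedding j) (hf : support f ⊆ range j) :
    tsupport f = j '' tsupport (f ∘ j) := by
  rw [tsupport, tsupport, ← hj.closure_image_eq, support_comp_eq_preimage,
    image_preimage_eq_of_subset hf]

theorem Topology.IsClosedEmbedding.continuous_of_support_subset_range [TopologicalSpace M]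
    (hj : IsClosedEmbedding j) (hopen : IsOpen (range j)) (hfj : Continuous (f ∘ j))
    (hf : support f ⊆ range j) : Continuous f :=
  continuous_of_tsupport fun _ hq => by
    obtain ⟨x, rfl⟩ := closure_minimal hf hj.isClosed_range hq
    exact (IsOpenEmbedding.continuousAt_iff ⟨hj.isEmbedding, hopen⟩).mp hfj.continuousAt

end ExtensionByZero

theorem MeasureTheory.integral_dite_mem_eq_integral_comap {α E : Type*} [MeasurableSpace α]
    [NormedAddCommGroup E] [NormedSpace ℝ E] {μ : Measure α} {s : Set α} (hs : MeasurableSet s)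
    (f : s → E) :
    ∫ a, (if h : a ∈ s then f ⟨a, h⟩ else 0) ∂μ = ∫ a, f a ∂(μ.comap Subtype.val) := by
  rw [← setIntegral_eq_integral_of_forall_compl_eq_zero fun a ha => dif_neg ha,
    ← integral_subtype_comap hs]
  simp only [Subtype.coe_prop, dite_true, Subtype.coe_eta]

theorem exists_isCompact_iUnion_smul_eq_iUnion_smul_image {G X Q : Type*} [Group G]
    [MulAction G Q] [TopologicalSpace Q] [ContinuousConstSMul G Q] [TopologicalSpace X]
    {j : X → Q} (hj : IsClosedEmbedding j) (hopen : IsOpen (range j))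
    (hcover : ⋃ g : G, g • range j = univ) {K : Set Q} (hK : IsCompact K) :
    ∃ P : Set X, IsCompact P ∧ ⋃ g : G, g • K = ⋃ g : G, g • j '' P := by
  obtain ⟨t, ht⟩ := hK.elim_finite_subcover (fun g : G => g • range j) (fun g => hopen.smul g)
    (hcover ▸ subset_univ K)
  refine ⟨⋃ g ∈ t, j ⁻¹' (g⁻¹ • K),
    t.isCompact_biUnion fun g _ => hj.isCompact_preimage (hK.smul g⁻¹), ?_⟩
  apply Subset.antisymm
  · rintro _ ⟨_, ⟨g', rfl⟩, k, hk, rfl⟩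
    obtain ⟨g, hgt, _, ⟨y, rfl⟩, rfl⟩ := mem_iUnion₂.mp (ht hk)
    refine mem_iUnion.mpr ⟨g' * g, j y, ⟨y, mem_biUnion hgt ?_, rfl⟩, mul_smul g' g (j y)⟩
    simpa [mem_smul_set_iff_inv_smul_mem] using hk
  · rintro _ ⟨_, ⟨g', rfl⟩, _, ⟨y, hy, rfl⟩, rfl⟩
    obtain ⟨g, -, k, hk, hkj⟩ := mem_iUnion₂.mp hy
    exact mem_iUnion.mpr ⟨g' * g⁻¹, k, hk,
      show (g' * g⁻¹) • k = g' • j y by rw [mul_smul, ← hkj]⟩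

abbrev Function.Surjective.mulActionOfFst {G X Q : Type*} [Group G] {π : G × X → Q}
    (hπ : Surjective π) (a : G → Q → Q) (ha : ∀ g' g x, a g' (π (g, x)) = π (g' * g, x)) :
    MulAction G Q where
  smul := a
  one_smul := hπ.forall.2 fun ⟨g, x⟩ => (ha 1 g x).trans (by rw [one_mul])
  mul_smul g₁ g₂ := hπ.forall.2 fun ⟨g, x⟩ => by
    change a _ _ = a _ (a _ _)
    rw [ha, ha, ha, mul_assoc]

theorem comp_mk_one_eq_of_eq_dite {G X Q M : Type*} [Group G] {H : Subgroup G} [MulAction H X]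
    [Zero M] {π : G × X → Q} {c : X → M} {ic : Q → M}
    (hic : ∀ g x, ic (π (g, x)) = if hg : g ∈ H then c ((⟨g, hg⟩ : H) • x) else 0) :
    (ic ∘ fun x => π (1, x)) = c :=
  funext fun x => by
    rw [comp_apply, hic, dif_pos H.one_mem]
    exact congrArg c (one_smul H x)

/-- `π : G × X → Q` presents `Q` as the induced space `G ×_H X`, `π (g, x) = [g, x]`. -/
structure IsInducedSpace {G X Q : Type*} [Group G] [TopologicalSpace G] [TopologicalSpace X]
    [TopologicalSpace Q] (H : Subgroup G) [MulAction H X] [MulAction G Q] (π : G × X → Q) :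
    Prop where
  isQuotientMap : IsQuotientMap π
  mk_eq_mk_iff : ∀ g g' x x', π (g, x) = π (g', x') ↔ ∃ h : H, g' = g * h⁻¹ ∧ x' = h • x
  smul_mk : ∀ g' g x, g' • π (g, x) = π (g' * g, x)

namespace IsInducedSpace

variable {G X Q : Type*} [Group G] [TopologicalSpace G] [TopologicalSpace X] [TopologicalSpace Q]
  {H : Subgroup G} [MulAction H X] [MulAction G Q] {π : G × X → Q}

theorem mk_eq_mk_one_iff (hQ : IsInducedSpace H π) {g : G} {x y : X} :
    π (g, x) = π (1, y) ↔ ∃ hg : g ∈ H, y = (⟨g, hg⟩ : H) • x := by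
  rw [hQ.mk_eq_mk_iff]
  constructor
  · rintro ⟨h, hg, rfl⟩
    obtain rfl : g = h := mul_inv_eq_one.mp hg.symm
    exact ⟨h.2, rfl⟩
  · rintro ⟨hg, rfl⟩
    exact ⟨⟨g, hg⟩, (mul_inv_cancel g).symm, rfl⟩

theorem preimage_range_mk_one (hQ : IsInducedSpace H π) :
    π ⁻¹' range (fun x => π (1, x)) = {p | p.1 ∈ H} := by
  ext ⟨g, x⟩
  simp only [mem_preimage, mem_range, mem_ofPred_eq, eq_comm (a := π (1, _)), hQ.mk_eq_mk_one_iff]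
  exact ⟨fun ⟨_, hg, _⟩ => hg, fun hg => ⟨_, hg, rfl⟩⟩

theorem isClopen_range_mk_one [SeparatelyContinuousMul G] (hQ : IsInducedSpace H π)
    (hH : IsOpen (H : Set G)) :
    IsClopen (range fun x => π (1, x)) := by
  have hpre : IsClopen (π ⁻¹' range fun x => π (1, x)) := by
    rw [hQ.preimage_range_mk_one]
    exact ⟨(H.isClosed_of_isOpen hH).preimage continuous_fst, hH.preimage continuous_fst⟩
  have hπ := hQ.isQuotientMap.isCoinducing
  exact ⟨hπ.isClosed_preimage.mp hpre.1, hπ.isOpen_preimage.mp hpre.2⟩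

theorem isOpenMap_mk_one [ContinuousSMul H X] (hQ : IsInducedSpace H π)
    (hH : IsOpen (H : Set G)) :
    IsOpenMap fun x => π (1, x) := by
  intro V hV
  have hpre : π ⁻¹' ((fun x => π (1, x)) '' V) =
      (fun r : H × X => ((r.1 : G), r.2)) '' {r | r.1 • r.2 ∈ V} := by
    ext ⟨g, x⟩
    simp only [mem_preimage, mem_image, eq_comm (b := π (g, x)), hQ.mk_eq_mk_one_iff]
    constructor
    · rintro ⟨_, hy, hg, rfl⟩
      exact ⟨(⟨g, hg⟩, x), hy, rfl⟩
    · rintro ⟨⟨h, x⟩, hx, hhx⟩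
      obtain ⟨rfl, rfl⟩ := Prod.mk.inj hhx
      exact ⟨_, hx, h.2, rfl⟩
  rw [← hQ.isQuotientMap.isCoinducing.isOpen_preimage, hpre]
  exact (hH.isOpenEmbedding_subtypeVal.prodMap .id).isOpenMap _ (hV.preimage continuous_smul)

theorem continuousConstSMul [SeparatelyContinuousMul G] (hQ : IsInducedSpace H π) :
    ContinuousConstSMul G Q where
  continuous_const_smul g := by
    rw [hQ.isQuotientMap.continuous_iff]
    have : (g • ·) ∘ π = π ∘ fun p => (g * p.1, p.2) := funext fun p => hQ.smul_mk g p.1 p.2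
    rw [this]
    exact hQ.isQuotientMap.continuous.comp
      (((continuous_const_mul g).comp continuous_fst).prodMk continuous_snd)

theorem mk_one_injective (hQ : IsInducedSpace H π) : Injective fun x => π (1, x) :=
  fun x _ hxy => by
    obtain ⟨_, rfl⟩ := hQ.mk_eq_mk_one_iff.mp hxy
    exact (one_smul H x).symm

theorem isClosedEmbedding_mk_one [SeparatelyContinuousMul G] [ContinuousSMul H X]
    (hQ : IsInducedSpace H π) (hH : IsOpen (H : Set G)) : IsClosedEmbedding fun x => π (1, x) :=
  ⟨(IsOpenEmbedding.of_continuous_injective_isOpenMap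
    (hQ.isQuotientMap.continuous.comp (Continuous.prodMk_right 1)) hQ.mk_one_injective
    (hQ.isOpenMap_mk_one hH)).isEmbedding, (hQ.isClopen_range_mk_one hH).isClosed⟩

theorem iUnion_smul_range_mk_one (hQ : IsInducedSpace H π) :
    ⋃ g : G, g • range (fun x => π (1, x)) = univ :=
  eq_univ_of_forall <| hQ.isQuotientMap.surjective.forall.2 fun ⟨g, x⟩ =>
    mem_iUnion.mpr ⟨g, π (1, x), mem_range_self x, show g • π (1, x) = π (g, x) by
      rw [hQ.smul_mk, mul_one]⟩

theorem preimage_iUnion_smul_image_mk_one (hQ : IsInducedSpace H π) (P : Set X) :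
    (fun x => π (1, x)) ⁻¹' ⋃ g : G, g • (fun x => π (1, x)) '' P = ⋃ h : H, h • P := by
  ext y
  simp only [mem_preimage, mem_iUnion, mem_smul_set, mem_image, exists_exists_and_eq_and,
    hQ.smul_mk, mul_one, hQ.mk_eq_mk_one_iff, Subtype.exists]
  exact ⟨fun ⟨g, p, hp, hg, hy⟩ => ⟨g, hg, p, hp, hy.symm⟩,
    fun ⟨g, hg, p, hp, hy⟩ => ⟨g, p, hp, hg, hy.symm⟩⟩

theorem support_subset_range_mk_one {M : Type*} [Zero M] (hQ : IsInducedSpace H π)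
    {c : X → M} {ic : Q → M}
    (hic : ∀ g x, ic (π (g, x)) = if hg : g ∈ H then c ((⟨g, hg⟩ : H) • x) else 0) :
    support ic ⊆ range fun x => π (1, x) := by
  refine hQ.isQuotientMap.surjective.forall.2 fun ⟨g, x⟩ hgx => ?_
  rw [mem_support, hic] at hgx
  obtain ⟨hg, -⟩ := dite_ne_right_iff.mp hgx
  exact ⟨_, (hQ.mk_eq_mk_one_iff.mpr ⟨hg, rfl⟩).symm⟩

theorem integral_smul_inv_mk [MeasurableSpace G] [MeasurableMul G] (hQ : IsInducedSpace H π)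
    (hH : MeasurableSet (H : Set G)) (μ : Measure G) [μ.IsMulLeftInvariant] {c : X → ℝ}
    {ic : Q → ℝ} (hic : ∀ g x, ic (π (g, x)) = if hg : g ∈ H then c ((⟨g, hg⟩ : H) • x) else 0)
    (g₀ : G) (x : X) :
    ∫ g, ic (g⁻¹ • π (g₀, x)) ∂μ = ∫ h : H, c (h⁻¹ • x) ∂μ.comap Subtype.val := by
  have hinv (g : G) :
      ic (π (g⁻¹, x)) = if hg : g ∈ H then c ((⟨g, hg⟩ : H)⁻¹ • x) else 0 := by
    rw [hic]
    by_cases hg : g ∈ H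
    · rw [dif_pos (H.inv_mem hg), dif_pos hg]
      rfl
    · rw [dif_neg (mt H.inv_mem_iff.mp hg), dif_neg hg]
  calc ∫ g, ic (g⁻¹ • π (g₀, x)) ∂μ = ∫ g, ic (π ((g₀⁻¹ * g)⁻¹, x)) ∂μ := by
        simp only [hQ.smul_mk, mul_inv_rev, inv_inv]
    _ = ∫ g, ic (π (g⁻¹, x)) ∂μ := integral_mul_left_eq_self (fun g => ic (π (g⁻¹, x))) g₀⁻¹
    _ = _ := by
      simp_rw [hinv]
      exact integral_dite_mem_eq_integral_comap hH (fun h : H => c (h⁻¹ • x))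

end IsInducedSpace

theorem stmt_18_general {G : Type*} [Group G] [TopologicalSpace G] [IsTopologicalGroup G]
    [MeasurableSpace G] [BorelSpace G]
    (μ : Measure G) [μ.IsHaarMeasure]
    (H : Subgroup G) (hH : IsOpen (H : Set G))
    {X : Type*} [TopologicalSpace X] [MulAction H X] [ContinuousSMul H X]
    -- c is a cutoff function for the H-action on X
    (c : X → ℝ) (hc : Continuous c) (hc0 : ∀ x, 0 ≤ c x)
    (hcsupp : ∀ K : Set X, IsCompact K → IsCompact (tsupport c ∩ ⋃ h : H, h • K))
    (hcint : ∀ x : X, ∫ h : H, c (h⁻¹ • x) ∂(Measure.comap Subtype.val μ) = 1)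
    -- the induced space Q = G ×_H X with its quotient topology and G-action
    (Q : Type*) [TopologicalSpace Q] (π : G × X → Q) (hπsurj : Surjective π)
    (hπ : ∀ (g g' : G) (x x' : X), π (g, x) = π (g', x') ↔
      ∃ h : H, g' = g * (↑h)⁻¹ ∧ x' = h • x)
    (hτQ : ∀ U : Set Q, IsOpen U ↔ IsOpen (π ⁻¹' U))
    (aQ : G → Q → Q) (haQ : ∀ (g' g : G) (x : X), aQ g' (π (g, x)) = π (g' * g, x))
    -- the extension i(c) of c to Q
    (ic : Q → ℝ)
    (hic : ∀ (g : G) (x : X), ic (π (g, x)) =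
      if hg : g ∈ H then c ((⟨g, hg⟩ : H) • x) else 0) :
    Continuous ic ∧ (∀ q, 0 ≤ ic q) ∧
      (∀ q : Q, ∫ g, ic (aQ g⁻¹ q) ∂μ = 1) ∧
      ∀ K : Set Q, IsCompact K → IsCompact (tsupport ic ∩ ⋃ g : G, aQ g '' K) := by
  let _ : MulAction G Q := hπsurj.mulActionOfFst aQ haQ
  have hQ : IsInducedSpace H π :=
    ⟨⟨.of_isOpen_preimage_iff_isOpen fun U => (hτQ U).symm, hπsurj⟩, hπ, haQ⟩
  have _ : ContinuousConstSMul G Q := hQ.continuousConstSMul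
  have hj := hQ.isClosedEmbedding_mk_one hH
  have hjopen := (hQ.isClopen_range_mk_one hH).isOpen
  have hsupp := hQ.support_subset_range_mk_one hic
  refine ⟨hj.continuous_of_support_subset_range hjopen ((comp_mk_one_eq_of_eq_dite hic).symm ▸ hc) hsupp,
    hπsurj.forall.2 fun ⟨g, x⟩ => ?_, hπsurj.forall.2 fun ⟨g₀, x⟩ => ?_, fun K hK => ?_⟩
  · rw [hic]
    split_ifs
    exacts [hc0 _, le_rfl]
  · exact (hQ.integral_smul_inv_mk hH.measurableSet μ hic g₀ x).trans (hcint x)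
  · obtain ⟨P, hP, hKP⟩ := exists_isCompact_iUnion_smul_eq_iUnion_smul_image hj hjopen
      hQ.iUnion_smul_range_mk_one hK
    change IsCompact (tsupport ic ∩ ⋃ g : G, g • K)
    rw [hj.tsupport_eq_image_of_support_subset_range hsupp, comp_mk_one_eq_of_eq_dite hic, hKP,
      ← image_inter_preimage, hQ.preimage_iUnion_smul_image_mk_one]
    exact (hcsupp P hP).image hj.continuous

/-- if c is a cutoff function for the proper action of an open subgroup
H ≤ G on X, then its extension i(c), i(c)[g,x] = c(gx) for g ∈ H and 0 otherwise, is a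
cutoff function for the proper G-action on the induced space Q = G ×_H X (here Q is
given as the quotient of G × X by h·(g,x) = (gh⁻¹,hx), with the quotient topology and
with G acting by left translation on the first coordinate; Haar measure on H is the
restriction of that of G). -/
theorem stmt_18 {G : Type*} [Group G] [TopologicalSpace G] [IsTopologicalGroup G]
    [LocallyCompactSpace G] [T2Space G] [MeasurableSpace G] [BorelSpace G]
    (μ : Measure G) [μ.IsHaarMeasure]
    (H : Subgroup G) (hH : IsOpen (H : Set G))
    {X : Type*} [TopologicalSpace X] [MulAction H X] [ContinuousSMul H X]
    (hXproper : BourbakiProper H X)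
    -- c is a cutoff function for the H-action on X
    (c : X → ℝ) (hc : Continuous c) (hc0 : ∀ x, 0 ≤ c x)
    (hcsupp : ∀ K : Set X, IsCompact K → IsCompact (tsupport c ∩ ⋃ h : H, h • K))
    (hcint : ∀ x : X, ∫ h : H, c (h⁻¹ • x) ∂(Measure.comap Subtype.val μ) = 1)
    -- the induced space Q = G ×_H X with its quotient topology and G-action
    (Q : Type*) [TopologicalSpace Q] (π : G × X → Q) (hπsurj : Surjective π)
    (hπ : ∀ (g g' : G) (x x' : X), π (g, x) = π (g', x') ↔
      ∃ h : H, g' = g * (↑h)⁻¹ ∧ x' = h • x)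
    (hτQ : ∀ U : Set Q, IsOpen U ↔ IsOpen (π ⁻¹' U))
    (aQ : G → Q → Q) (haQ : ∀ (g' g : G) (x : X), aQ g' (π (g, x)) = π (g' * g, x))
    -- the extension i(c) of c to Q
    (ic : Q → ℝ)
    (hic : ∀ (g : G) (x : X), ic (π (g, x)) =
      if hg : g ∈ H then c ((⟨g, hg⟩ : H) • x) else 0) :
    Continuous ic ∧ (∀ q, 0 ≤ ic q) ∧
      (∀ q : Q, ∫ g, ic (aQ g⁻¹ q) ∂μ = 1) ∧
      ∀ K : Set Q, IsCompact K → IsCompact (tsupport ic ∩ ⋃ g : G, aQ g '' K) :=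
  stmt_18_general μ H hH c hc hc0 hcsupp hcint Q π hπsurj hπ hτQ aQ haQ ic hic
end
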